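/- The semantics of Δα can be characterized by unfolding: Π ⊨_T Δα if and only if there exists k ≥ 0 such that (Π, 0, k) ∈ R(α) and Π[k, ∞] ⊨_T Δα. (In ordered form: Π ⊨ Δα iff there is a strictly monotone-unbounded or eventually constant sequence 0 = k₁ ≤ k₂ ≤ … with (Π, k_i, k_{i+1}) ∈ R(α) for all i ≥ 1.) -/

import Mathlib

/-- A trace: an infinite alternating sequence of labels (sets of atomic propositions)
and atomic programs; `lab j` is the label at step `j`, `act j` the atomic program
between steps `j` and `j+1`. -/
structure Trace (AP P : Type) where
  lab : ℕ → Set AP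
  act : ℕ → P

/-- The suffix of a trace starting after `j` steps. -/
def Trace.drop {AP P : Type} (t : Trace AP P) (j : ℕ) : Trace AP P :=
  ⟨fun m => t.lab (j + m), fun m => t.act (j + m)⟩

/-- The shifted trace assignment. -/
def TAdrop {AP P : Type} {n : ℕ} (Pa : Fin n → Trace AP P) (j : ℕ) : Fin n → Trace AP P :=
  fun l => (Pa l).drop j

mutual
/-- Quantifier-free HyperPDL-Δ formulas over `n` path variables. -/
inductive QF (AP P : Type) (n : ℕ) : Type
  | atom (a : AP) (l : Fin n) : QF AP P n
  | not (φ : QF AP P n) : QF AP P n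
  | and (φ ψ : QF AP P n) : QF AP P n
  | or (φ ψ : QF AP P n) : QF AP P n
  | dia (α : Pg AP P n) (φ : QF AP P n) : QF AP P n
  | box (α : Pg AP P n) (φ : QF AP P n) : QF AP P n
  | delta (α : Pg AP P n) : QF AP P n

/-- Programs of HyperPDL-Δ (with `none` as the wildcard coordinate). -/
inductive Pg (AP P : Type) (n : ℕ) : Type
  | atom (t : Fin n → Option P) : Pg AP P n
  | eps : Pg AP P n
  | sum (a b : Pg AP P n) : Pg AP P n
  | seq (a b : Pg AP P n) : Pg AP P n
  | star (a : Pg AP P n) : Pg AP P n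
  | test (φ : QF AP P n) : Pg AP P n
end

mutual
/-- Satisfaction of a quantifier-free formula by a trace assignment. -/
def QF.Sat {AP P : Type} {n : ℕ} : QF AP P n → (Fin n → Trace AP P) → Prop
  | .atom a l, Pa => a ∈ (Pa l).lab 0
  | .not φ, Pa => ¬ φ.Sat Pa
  | .and φ ψ, Pa => φ.Sat Pa ∧ ψ.Sat Pa
  | .or φ ψ, Pa => φ.Sat Pa ∨ ψ.Sat Pa
  | .dia α φ, Pa => ∃ j, α.Rel Pa 0 j ∧ φ.Sat (TAdrop Pa j)
  | .box α φ, Pa => ∀ j, α.Rel Pa 0 j → φ.Sat (TAdrop Pa j)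
  | .delta α, Pa => ∃ k : ℕ → ℕ, k 0 = 0 ∧ (∀ i, k i ≤ k (i + 1)) ∧
      ∀ i, α.Rel Pa (k i) (k (i + 1))

/-- The relation `(Π, i, k) ∈ R(α)` (indices count steps). -/
def Pg.Rel {AP P : Type} {n : ℕ} : Pg AP P n → (Fin n → Trace AP P) → ℕ → ℕ → Prop
  | .atom t, Pa, i, k => k = i + 1 ∧ ∀ l, t l = none ∨ t l = some ((Pa l).act i)
  | .eps, _, i, k => i = k
  | .sum a b, Pa, i, k => a.Rel Pa i k ∨ b.Rel Pa i k
  | .seq a b, Pa, i, k => ∃ j, i ≤ j ∧ j ≤ k ∧ a.Rel Pa i j ∧ b.Rel Pa j k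
  | .star a, Pa, i, k => ∃ (m : ℕ) (js : Fin (m + 1) → ℕ), js 0 = i ∧ js (Fin.last m) = k ∧
      ∀ l : Fin m, js l.castSucc ≤ js l.succ ∧ a.Rel Pa (js l.castSucc) (js l.succ)
  | .test φ, Pa, i, k => i = k ∧ φ.Sat (TAdrop Pa i)
end

/-! The witness sequence for `Δα` is a monotone `α`-chain from `0`. Dropping its first element
gives a chain from some `k` with `(Π, 0, k) ∈ R(α)`, and prepending `0` reverses this. A chain
from `k` for `Π` is a chain from `0` for `Π[k, ∞]` because `R(α)` only depends on positions
relative to the start of the traces. -/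

def MonotoneChainFrom (R : ℕ → ℕ → Prop) (a : ℕ) : Prop :=
  ∃ k : ℕ → ℕ, k 0 = a ∧ (∀ i, k i ≤ k (i + 1)) ∧ ∀ i, R (k i) (k (i + 1))

theorem monotoneChainFrom_iff_exists (R : ℕ → ℕ → Prop) (a : ℕ) :
    MonotoneChainFrom R a ↔ ∃ b, a ≤ b ∧ R a b ∧ MonotoneChainFrom R b := by
  constructor
  · rintro ⟨k, rfl, hmono, hR⟩
    exact ⟨k 1, hmono 0, hR 0, (k <| · + 1), rfl, (hmono <| · + 1), (hR <| · + 1)⟩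
  · rintro ⟨b, hab, hR, k, rfl, hmono, hRk⟩
    refine ⟨Nat.rec a fun i _ => k i, rfl, ?_, ?_⟩
    · rintro (_ | i)
      exacts [hab, hmono i]
    · rintro (_ | i)
      exacts [hR, hRk i]

theorem monotoneChainFrom_zero_iff_of_shift {R S : ℕ → ℕ → Prop} {j : ℕ}
    (hS : ∀ i k, S i k ↔ R (j + i) (j + k)) :
    MonotoneChainFrom S 0 ↔ MonotoneChainFrom R j := by
  constructor
  · rintro ⟨k, h0, hmono, hS'⟩
    exact ⟨(j + k ·), by simp [h0], fun i => Nat.add_le_add_left (hmono i) j,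
      fun i => (hS _ _).1 (hS' i)⟩
  · rintro ⟨k, rfl, hmono, hR⟩
    have hge : ∀ i, k 0 ≤ k i := fun i => monotone_nat_of_le_succ hmono (Nat.zero_le i)
    refine ⟨(k · - k 0), Nat.sub_self _, fun i => Nat.sub_le_sub_right (hmono i) _, fun i => ?_⟩
    rw [hS, Nat.add_sub_cancel' (hge _), Nat.add_sub_cancel' (hge _)]
    exact hR i

theorem TAdrop_TAdrop {AP P : Type} {n : ℕ} (Pa : Fin n → Trace AP P) (j i : ℕ) :
    TAdrop (TAdrop Pa j) i = TAdrop Pa (j + i) := by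
  funext l
  simp only [TAdrop, Trace.drop, Nat.add_assoc]

theorem Pg.rel_TAdrop {AP P : Type} {n : ℕ} :
    ∀ (α : Pg AP P n) (Pa : Fin n → Trace AP P) (j i k : ℕ),
      α.Rel (TAdrop Pa j) i k ↔ α.Rel Pa (j + i) (j + k)
  | .atom t, Pa, j, i, k => by
      simp only [Pg.Rel, TAdrop, Trace.drop, Nat.add_assoc, Nat.add_left_cancel_iff]
  | .eps, Pa, j, i, k => by
      simp only [Pg.Rel, Nat.add_left_cancel_iff]
  | .sum a b, Pa, j, i, k => by
      simp only [Pg.Rel, rel_TAdrop a, rel_TAdrop b]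
  | .seq a b, Pa, j, i, k => by
      simp only [Pg.Rel, rel_TAdrop a, rel_TAdrop b]
      constructor
      · rintro ⟨m, him, hmk, ha, hb⟩
        exact ⟨j + m, by omega, by omega, ha, hb⟩
      · rintro ⟨m, him, hmk, ha, hb⟩
        obtain ⟨m, rfl⟩ := Nat.exists_eq_add_of_le (le_of_add_le_left him)
        exact ⟨m, by omega, by omega, ha, hb⟩
  | .star a, Pa, j, i, k => by
      simp only [Pg.Rel, rel_TAdrop a]
      constructor
      · rintro ⟨m, js, h0, hlast, hstep⟩
        exact ⟨m, (j + js ·), by simp [h0], by simp [hlast],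
          fun l => ⟨by simp [(hstep l).1], (hstep l).2⟩⟩
      · rintro ⟨m, js, h0, hlast, hstep⟩
        have hmono : Monotone js := Fin.monotone_iff_le_succ.2 fun l => (hstep l).1
        have hge : ∀ l, j ≤ js l := fun l =>
          (Nat.le_add_right j i).trans (h0.ge.trans (hmono (Fin.zero_le l)))
        refine ⟨m, (js · - j), by simp [h0], by simp [hlast],
          fun l => ⟨Nat.sub_le_sub_right (hstep l).1 j, ?_⟩⟩
        rw [Nat.add_sub_cancel' (hge _), Nat.add_sub_cancel' (hge _)]
        exact (hstep l).2
  | .test φ, Pa, j, i, k => by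
      simp only [Pg.Rel, TAdrop_TAdrop, Nat.add_left_cancel_iff]

theorem QF.sat_delta_iff {AP P : Type} {n : ℕ} (α : Pg AP P n) (Pa : Fin n → Trace AP P) :
    (QF.delta α).Sat Pa ↔ MonotoneChainFrom (α.Rel Pa) 0 := by
  rw [QF.Sat, MonotoneChainFrom]

/-- **Unfolding of `Δα`**: `Π ⊨ Δα` holds iff some prefix of the assignment matches `α`
and the corresponding suffix again satisfies `Δα`. -/
theorem delta_unfold {AP P : Type} {n : ℕ} (α : Pg AP P n) (Pa : Fin n → Trace AP P) :
    (QF.delta α).Sat Pa ↔ ∃ k, α.Rel Pa 0 k ∧ (QF.delta α).Sat (TAdrop Pa k) := by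
  have hshift : ∀ k, (QF.delta α).Sat (TAdrop Pa k) ↔ MonotoneChainFrom (α.Rel Pa) k := by
    intro k
    rw [QF.sat_delta_iff]
    exact monotoneChainFrom_zero_iff_of_shift (Pg.rel_TAdrop α Pa k)
  simp only [QF.sat_delta_iff, hshift]
  rw [monotoneChainFrom_iff_exists]
  simp only [Nat.zero_le, true_and]
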